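/- If the signed graph Σ = (Γ, σ) admits a completely reversible proper zero-free n-edge coloring, then for every signature σ' on Γ the signed graph (Γ, σ') also admits a completely reversible proper zero-free n-edge coloring. -/

import Mathlib

/-! Put `τ(e) = σ(e) σ'(e)`. Each magnitude graph `Σ_m` is a forest, so `τ` is a coboundary on it:
there are signs `g_m(v)` with `τ(vw) = g_m(v) g_m(w)` on the edges of `Σ_m`, e.g. the product of `τ`
along the path from a fixed root of the component of `v`. Multiplying the colour at every incidence
`(v, e)` of magnitude `m` by `g_m(v)` switches each `Σ_m` separately; it turns the coloring of
`(Γ, σ)` into one of `(Γ, σ')` and changes no magnitude, so properness, zero-freeness and all the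
magnitude graphs are preserved. -/

open SimpleGraph

/-- The signed color set `M_n`: for `n = 2k+1` it is `{0, ±1, …, ±k}`,
and for `n = 2k` it is `{±1, …, ±k}`. -/
def Mset (n : ℕ) : Set ℤ :=
  {a : ℤ | 2 * a.natAbs ≤ n ∧ (a = 0 → Odd n)}

/-- An `n`-edge coloring of the signed graph `(G, σ)`: an assignment of colors from `Mset n`
to the incidences of `G` such that `γ(v,e) = -σ(e)·γ(w,e)` for each edge `e : vw`. -/
structure SColoring {V : Type*} (G : SimpleGraph V) (σ : Sym2 V → ℤ) (n : ℕ) where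
  col : V → Sym2 V → ℤ
  mem_colors : ∀ ⦃v w : V⦄, G.Adj v w → col v s(v, w) ∈ Mset n
  compat : ∀ ⦃v w : V⦄, G.Adj v w → col v s(v, w) = -σ s(v, w) * col w s(v, w)

namespace SColoring

variable {V : Type*} {G : SimpleGraph V} {σ : Sym2 V → ℤ} {n : ℕ}

/-- A coloring is proper if distinct edges incident to a common vertex receive
distinct colors at that vertex. -/
def Proper (c : SColoring G σ n) : Prop :=
  ∀ ⦃v w x : V⦄, G.Adj v w → G.Adj v x → w ≠ x → c.col v s(v, w) ≠ c.col v s(v, x)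

/-- A coloring is zero-free if the color `0` is never used. -/
def ZeroFree (c : SColoring G σ n) : Prop :=
  ∀ ⦃v w : V⦄, G.Adj v w → c.col v s(v, w) ≠ 0

/-- The color `a` is absent at the vertex `v` if no edge incident to `v` is
colored `a` at `v`. -/
def Absent (c : SColoring G σ n) (a : ℤ) (v : V) : Prop :=
  ∀ ⦃w : V⦄, G.Adj v w → c.col v s(v, w) ≠ a

end SColoring

/-- The magnitude graph `Σ_a`: the spanning subgraph of `G` consisting of the edges
all of whose incidences are colored `+a` or `-a`. -/
def magGraph {V : Type*} (G : SimpleGraph V) (col : V → Sym2 V → ℤ) (a : ℤ) :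
    SimpleGraph V where
  Adj v w := G.Adj v w ∧ (col v s(v, w) = a ∨ col v s(v, w) = -a) ∧
    (col w s(v, w) = a ∨ col w s(v, w) = -a)
  symm := ⟨by
    rintro v w ⟨h1, h2, h3⟩
    exact ⟨h1.symm, by rwa [Sym2.eq_swap], by rwa [Sym2.eq_swap]⟩⟩
  loopless := ⟨fun v h => G.irrefl h.1⟩

/-- A proper zero-free coloring is completely reversible iff every component of every
magnitude graph is a path, i.e. every magnitude graph is acyclic (a linear forest,
since it has maximum degree at most 2). -/
def CompletelyReversible {V : Type*} {G : SimpleGraph V} {σ : Sym2 V → ℤ} {n : ℕ}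
    (c : SColoring G σ n) : Prop :=
  ∀ a : ℤ, a ≠ 0 → (magGraph G c.col a).IsAcyclic

namespace SimpleGraph

variable {V : Type*} {G : SimpleGraph V}

theorem IsAcyclic.exists_potential {M : Type*} [CommMonoid M] (hG : G.IsAcyclic)
    (f : Sym2 V → M) (hf : ∀ e ∈ G.edgeSet, f e * f e = 1) :
    ∃ g : V → M, ∀ ⦃x y : V⦄, G.Adj x y → g y = g x * f s(x, y) := by
  classical
  obtain ⟨root, hroot_reach, hroot_adj⟩ : ∃ root : V → V,
      (∀ x, G.Reachable (root x) x) ∧ ∀ ⦃x y⦄, G.Adj x y → root y = root x :=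
    ⟨fun x => (G.connectedComponentMk x).out,
      fun x => ConnectedComponent.exact (G.connectedComponentMk x).out_eq,
      fun x y h => congrArg Quot.out (ConnectedComponent.connectedComponentMk_eq_of_adj h).symm⟩
  choose p hp using fun x => (hroot_reach x).exists_isPath
  have prod_eq : ∀ ⦃r z : V⦄, root z = r → ∀ q : G.Walk r z, q.IsPath →
      ((p z).edges.map f).prod = (q.edges.map f).prod := by
    rintro r z rfl q hq
    have : p z = q :=
      congrArg Subtype.val ((hG.subsingleton_path _ _).elim ⟨p z, hp z⟩ ⟨q, hq⟩)
    rw [this]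
  refine ⟨fun x => ((p x).edges.map f).prod, fun x y h => ?_⟩
  beta_reduce
  -- Either the root path of `x` passes through `y`, and then ends with the edge `yx`,
  -- or extending it by `xy` gives a root path of `y`.
  by_cases hy : y ∈ (p x).support
  · have hdrop : (p x).dropUntil y hy = Walk.cons h.symm Walk.nil :=
      congrArg Subtype.val ((hG.subsingleton_path _ _).elim
        ⟨_, (hp x).dropUntil hy⟩ (Path.singleton h.symm))
    have hx : ((p x).edges.map f).prod = ((p y).edges.map f).prod * f s(y, x) := by
      conv_lhs => rw [← (p x).take_spec hy]
      rw [Walk.edges_append, hdrop, prod_eq (hroot_adj h) _ ((hp x).takeUntil hy)]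
      simp
    rw [hx, mul_assoc, Sym2.eq_swap, hf _ h, mul_one]
  · rw [prod_eq (hroot_adj h) _ ((hp x).concat hy h), Walk.edges_concat]
    simp

end SimpleGraph

theorem Int.units_mul_eq_or_eq_neg_iff (u : ℤˣ) {x a : ℤ} :
    (u * x = a ∨ u * x = -a) ↔ (x = a ∨ x = -a) := by
  rcases Int.units_eq_one_or u with rfl | rfl
  · simp
  · simp only [Units.val_neg, Units.val_one, neg_mul, one_mul]
    omega

namespace SColoring

variable {V : Type*} {G : SimpleGraph V} {σ σ' : Sym2 V → ℤ} {n : ℕ} (c : SColoring G σ n)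

theorem natAbs_col_swap (hσ : ∀ e ∈ G.edgeSet, σ e = 1 ∨ σ e = -1) {v w : V} (h : G.Adj v w) :
    (c.col w s(v, w)).natAbs = (c.col v s(v, w)).natAbs := by
  rw [c.compat h, Int.natAbs_mul, Int.natAbs_neg]
  rcases hσ s(v, w) h with hs | hs <;> simp [hs]

theorem magGraph_adj_natAbs (hσ : ∀ e ∈ G.edgeSet, σ e = 1 ∨ σ e = -1) {v w : V}
    (h : G.Adj v w) : (magGraph G c.col (c.col v s(v, w)).natAbs).Adj v w :=
  ⟨h, Int.natAbs_eq _, c.natAbs_col_swap hσ h ▸ Int.natAbs_eq _⟩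

theorem isAcyclic_magGraph (hz : c.ZeroFree) (hrev : CompletelyReversible c) (m : ℕ) :
    (magGraph G c.col m).IsAcyclic := by
  rcases eq_or_ne m 0 with rfl | hm
  · have : magGraph G c.col (0 : ℕ) = ⊥ := by
      ext v w
      simp only [magGraph, Nat.cast_zero, neg_zero, or_self, bot_adj, iff_false]
      exact fun ⟨h, h0, _⟩ => hz h h0
    rw [this]
    exact isAcyclic_bot
  · exact hrev m (by exact_mod_cast hm)

def switch (hσ : ∀ e ∈ G.edgeSet, σ e = 1 ∨ σ e = -1) (g : ℕ → V → ℤˣ)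
    (hg : ∀ ⦃v w : V⦄, G.Adj v w → σ' s(v, w) =
      g (c.col v s(v, w)).natAbs v * σ s(v, w) * g (c.col v s(v, w)).natAbs w) :
    SColoring G σ' n where
  col v e := g (c.col v e).natAbs v * c.col v e
  mem_colors v w h := by
    obtain ⟨hle, hzero⟩ := c.mem_colors h
    refine ⟨by simpa [Int.natAbs_mul] using hle, fun h0 => hzero ?_⟩
    simpa using h0
  compat v w h := by
    rw [c.natAbs_col_swap hσ h, hg h]
    generalize (c.col v s(v, w)).natAbs = m
    rw [c.compat h]
    linear_combination σ s(v, w) * c.col w s(v, w) * g m v * Int.units_coe_mul_self (g m w)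

variable {c} {hσ : ∀ e ∈ G.edgeSet, σ e = 1 ∨ σ e = -1} {g : ℕ → V → ℤˣ}
  {hg : ∀ ⦃v w : V⦄, G.Adj v w → σ' s(v, w) =
      g (c.col v s(v, w)).natAbs v * σ s(v, w) * g (c.col v s(v, w)).natAbs w}

theorem switch_proper (hc : c.Proper) : (c.switch hσ g hg).Proper := by
  intro v w x hvw hvx hne heq
  have habs : (c.col v s(v, w)).natAbs = (c.col v s(v, x)).natAbs := by
    simpa [switch, Int.natAbs_mul] using congrArg Int.natAbs heq
  simp only [switch, habs] at heq
  exact hc hvw hvx hne (mul_left_cancel₀ (Units.ne_zero _) heq)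

theorem switch_zeroFree (hz : c.ZeroFree) : (c.switch hσ g hg).ZeroFree := fun v w h => by
  simpa [switch] using hz h

theorem magGraph_switch (a : ℤ) : magGraph G (c.switch hσ g hg).col a = magGraph G c.col a := by
  ext v w
  simp only [magGraph, switch, Int.units_mul_eq_or_eq_neg_iff]

theorem switch_completelyReversible (hrev : CompletelyReversible c) :
    CompletelyReversible (c.switch hσ g hg) := fun a ha => by
  rw [magGraph_switch]
  exact hrev a ha

end SColoring

theorem completelyReversible_of_any_signature_general {V : Type*}
    (G : SimpleGraph V) (σ σ' : Sym2 V → ℤ)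
    (hσ : ∀ e ∈ G.edgeSet, σ e = 1 ∨ σ e = -1)
    (hσ' : ∀ e ∈ G.edgeSet, σ' e = 1 ∨ σ' e = -1)
    (n : ℕ) (c : SColoring G σ n) (hc : c.Proper) (hz : c.ZeroFree)
    (hrev : CompletelyReversible c) :
    ∃ c' : SColoring G σ' n, c'.Proper ∧ c'.ZeroFree ∧ CompletelyReversible c' := by
  let τ : Sym2 V → ℤˣ := fun e => if σ e = σ' e then 1 else -1
  have hτ : ∀ e ∈ G.edgeSet, σ' e = τ e * σ e := fun e he => by
    rcases hσ e he with h | h <;> rcases hσ' e he with h' | h' <;> simp [τ, h, h']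
  choose g hg using fun m : ℕ =>
    (c.isAcyclic_magGraph hz hrev m).exists_potential τ fun e _ => Int.units_mul_self (τ e)
  refine ⟨c.switch hσ g fun v w h => ?_, SColoring.switch_proper hc,
    SColoring.switch_zeroFree hz, SColoring.switch_completelyReversible hrev⟩
  rw [hg _ (c.magGraph_adj_natAbs hσ h), hτ _ h, Units.val_mul]
  linear_combination (-(τ s(v, w) * σ s(v, w) : ℤ)) *
    Int.units_coe_mul_self (g (c.col v s(v, w)).natAbs v)

/-- If `Σ = (Γ, σ)` admits a completely reversible proper zero-free `n`-edge coloring,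
then so does `(Γ, σ')` for every signature `σ'` on `Γ`. -/
theorem completelyReversible_of_any_signature {V : Type*} [Fintype V]
    (G : SimpleGraph V) (σ σ' : Sym2 V → ℤ)
    (hσ : ∀ e ∈ G.edgeSet, σ e = 1 ∨ σ e = -1)
    (hσ' : ∀ e ∈ G.edgeSet, σ' e = 1 ∨ σ' e = -1)
    (n : ℕ) (c : SColoring G σ n) (hc : c.Proper) (hz : c.ZeroFree)
    (hrev : CompletelyReversible c) :
    ∃ c' : SColoring G σ' n, c'.Proper ∧ c'.ZeroFree ∧ CompletelyReversible c' :=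
  completelyReversible_of_any_signature_general G σ σ' hσ hσ' n c hc hz hrev
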